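/- Let n ≥ 1 and let G be a strongly connected directed simple graph on Fin n. Then for every k, l : Fin n and every α : ℂ, there exists A ∈ Θ_G such that the determinant of the (n−1)×(n−1) matrix (A − α • (1 : Matrix (Fin n) (Fin n) ℂ)).submatrix (Fin.succAbove k) (Fin.succAbove l), obtained from A by subtracting α from every diagonal entry and deleting row k and column l, is nonzero. -/

import Mathlib

/-!
Take a path `k = v₀ → v₁ → ⋯ → v_d = l` of minimal length and let `π` be the cycle
`k ↦ l ↦ v_{d-1} ↦ ⋯ ↦ v₁ ↦ k`: every vertex other than `k` that `π` moves is sent to an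
in-neighbour. The matrix `α • 1 + P`, where `P` is the permutation matrix of `π` with row `k`
cleared, lies in `Θ_G`. Subtracting `α • 1` and deleting row `k` and column `l = π k` leaves the
permutation matrix of the permutation that `π` induces between the remaining indices, whose
determinant is `±1`.
-/

open Matrix

variable {V : Type*}

/-- The parameter space `Θ_G` of a directed simple graph given by the edge
relation `E` (where `E j i` means there is an edge `j → i`): matrices whose
off-diagonal entry `(i,j)` vanishes unless `j → i` is an edge. -/
def Theta (E : V → V → Prop) : Set (Matrix V V ℂ) :=
  {A | ∀ i j, i ≠ j → ¬ E j i → A i j = 0}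

/-- The embedding `Fin (n-1) → Fin n` skipping the index `k`
(deleting row/column `k`). -/
def delEmb {n : ℕ} (k : Fin n) (i : Fin (n - 1)) : Fin n :=
  if i.1 < k.1 then ⟨i.1, by have := i.isLt; have := k.isLt; omega⟩
  else ⟨i.1 + 1, by have := i.isLt; omega⟩

open Equiv

def ReachesWithin (E : V → V → Prop) : ℕ → V → V → Prop
  | 0 => Eq
  | m + 1 => fun a c => ReachesWithin E m a c ∨ ∃ b, E a b ∧ ReachesWithin E m b c

theorem Relation.ReflTransGen.exists_reachesWithin {E : V → V → Prop} {a b : V}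
    (h : Relation.ReflTransGen E a b) : ∃ m, ReachesWithin E m a b := by
  induction h using Relation.ReflTransGen.head_induction_on with
  | refl => exact ⟨0, rfl⟩
  | head hac _ ih =>
    obtain ⟨m, hm⟩ := ih
    exact ⟨m + 1, .inr ⟨_, hac, hm⟩⟩

/-- The last conjunct is the induction invariant: when `k` is at distance exactly `m + 1` from
`l`, the permutation built for its successor fixes `k`, so composing it with a transposition
closes the cycle through `k`. -/
theorem exists_perm_of_reachesWithin [DecidableEq V] {E : V → V → Prop} {l : V} (m : ℕ) :
    ∀ k, ReachesWithin E m k l → ∃ π : Perm V, π k = l ∧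
      (∀ i, i ≠ k → π i ≠ i → E (π i) i) ∧ ∀ i, π i ≠ i → ReachesWithin E m i l := by
  induction m with
  | zero =>
    rintro k rfl
    exact ⟨1, rfl, by simp, by simp⟩
  | succ m ih =>
    intro k hk
    by_cases hkm : ReachesWithin E m k l
    · obtain ⟨π, hπk, hπE, hπm⟩ := ih k hkm
      exact ⟨π, hπk, hπE, fun i hi => .inl (hπm i hi)⟩
    obtain ⟨v, hkv, hv⟩ := hk.resolve_left hkm
    obtain ⟨π, hπv, hπE, hπm⟩ := ih v hv
    have hπk : π k = k := by_contra fun h => hkm (hπm k h)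
    refine ⟨π * swap k v, by simp [hπv], fun i hik hi => ?_, fun i hi => ?_⟩
    · rcases eq_or_ne i v with rfl | hiv
      · simpa [hπk] using hkv
      · simp only [Perm.mul_apply, swap_apply_of_ne_of_ne hik hiv] at hi ⊢
        exact hπE i hiv hi
    · rcases eq_or_ne i k with rfl | hik
      · exact hk
      rcases eq_or_ne i v with rfl | hiv
      · exact .inl hv
      · rw [Perm.mul_apply, swap_apply_of_ne_of_ne hik hiv] at hi
        exact .inl (hπm i hi)

theorem Relation.ReflTransGen.exists_perm_apply_eq [DecidableEq V] {E : V → V → Prop}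
    {k l : V} (h : Relation.ReflTransGen E k l) :
    ∃ π : Perm V, π k = l ∧ ∀ i, i ≠ k → π i ≠ i → E (π i) i := by
  obtain ⟨m, hm⟩ := h.exists_reachesWithin
  obtain ⟨π, hπk, hπE, -⟩ := exists_perm_of_reachesWithin m k hm
  exact ⟨π, hπk, hπE⟩

theorem smul_one_add_mem_Theta [DecidableEq V] {E : V → V → Prop} {A : Matrix V V ℂ}
    (hA : A ∈ Theta E) (α : ℂ) : α • 1 + A ∈ Theta E := by
  intro i j hij hE
  simp [one_apply_ne hij, hA i j hij hE]

theorem updateRow_permMatrix_mem_Theta [DecidableEq V] {E : V → V → Prop} {π : Perm V} {k : V}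
    (hπ : ∀ i, i ≠ k → π i ≠ i → E (π i) i) : (π.permMatrix ℂ).updateRow k 0 ∈ Theta E := by
  intro i j hij hE
  rcases eq_or_ne i k with rfl | hik
  · simp
  · simp only [updateRow_ne hik, PEquiv.toMatrix_apply, toPEquiv_apply, Option.mem_some_iff]
    rw [if_neg]
    rintro rfl
    exact hE (hπ i hik (Ne.symm hij))

def Equiv.Perm.restrictSuccAbove {m : ℕ} (π : Perm (Fin (m + 1))) {k l : Fin (m + 1)}
    (h : π k = l) : Perm (Fin m) :=
  (finSuccAboveEquiv k).trans <|
    (π.subtypeEquiv fun x => by rw [← h, π.injective.ne_iff]).trans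
      (finSuccAboveEquiv l).symm

theorem Equiv.Perm.succAbove_restrictSuccAbove {m : ℕ} {π : Perm (Fin (m + 1))}
    {k l : Fin (m + 1)} (h : π k = l) (a : Fin m) :
    l.succAbove (π.restrictSuccAbove h a) = π (k.succAbove a) :=
  congrArg Subtype.val ((finSuccAboveEquiv l).apply_symm_apply _)

theorem submatrix_succAbove_permMatrix (R : Type*) [Zero R] [One R] {m : ℕ}
    {π : Perm (Fin (m + 1))} {k l : Fin (m + 1)} (h : π k = l) :
    (π.permMatrix R).submatrix k.succAbove l.succAbove = (π.restrictSuccAbove h).permMatrix R := by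
  ext a b
  simp [PEquiv.toMatrix_apply, ← Perm.succAbove_restrictSuccAbove h]

theorem delEmb_eq_succAbove {m : ℕ} (p : Fin (m + 1)) :
    (delEmb p : Fin m → Fin (m + 1)) = p.succAbove := by
  funext i
  simp only [delEmb, Fin.succAbove, Fin.lt_def, Fin.val_castSucc]
  split_ifs <;> rfl

theorem exists_param_det_ne_zero_general (n : ℕ)
    (E : Fin n → Fin n → Prop)
    (hsc : ∀ u v : Fin n, Relation.ReflTransGen E u v)
    (k l : Fin n) (α : ℂ) :
    ∃ A ∈ Theta E,
      ((A - α • (1 : Matrix (Fin n) (Fin n) ℂ)).submatrix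
        (delEmb k) (delEmb l)).det ≠ 0 := by
  obtain ⟨m, rfl⟩ : ∃ m, n = m + 1 := Nat.exists_eq_add_one.mpr k.pos
  obtain ⟨π, hπk, hπE⟩ := (hsc k l).exists_perm_apply_eq
  refine ⟨α • 1 + (π.permMatrix ℂ).updateRow k 0,
    smul_one_add_mem_Theta (updateRow_permMatrix_mem_Theta hπE) α, ?_⟩
  rw [add_sub_cancel_left, delEmb_eq_succAbove, delEmb_eq_succAbove,
    submatrix_updateRow_succAbove, submatrix_succAbove_permMatrix ℂ hπk, det_permutation]
  exact (Perm.sign _).isUnit.map (Int.castRingHom ℂ) |>.ne_zero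

/-- For a strongly connected directed simple graph on
`Fin n`, any `k, l` and any `α : ℂ`, there is `A ∈ Θ_G` such that the matrix
`A_{k,l,α}`, obtained from `A` by subtracting `α` from every diagonal entry
and deleting row `k` and column `l`, has nonzero determinant. -/
theorem exists_param_det_ne_zero (n : ℕ) (hn : 1 ≤ n)
    (E : Fin n → Fin n → Prop) (hirr : ∀ v, ¬ E v v)
    (hsc : ∀ u v : Fin n, Relation.ReflTransGen E u v)
    (k l : Fin n) (α : ℂ) :
    ∃ A ∈ Theta E,
      ((A - α • (1 : Matrix (Fin n) (Fin n) ℂ)).submatrix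
        (delEmb k) (delEmb l)).det ≠ 0 :=
  exists_param_det_ne_zero_general n E hsc k l α
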